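/- Let {A_i} be a tower of abelian groups where each A_i is free abelian and the tower is the tower of duals Hom(B_i, ℤ) of a direct sequence {B_i} of abelian groups. Then lim¹_i Hom(B_i, ℤ) ≅ Ext¹_ℤ(colim_i B_i, ℤ) provided each B_i is free abelian of finite rank. -/

import Mathlib

/-!
Let `σ` be the endomorphism of `⨁ Bᵢ` moving the `i`-th summand to the `(i+1)`-st along `fᵢ`.
The sequence `0 → ⨁ Bᵢ → ⨁ Bᵢ → colim Bᵢ → 0`, whose first map is `1 - σ` (`telescope f`), is
exact: `1 - σ` is injective by a telescoping argument, and its cokernel satisfies the universal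
property of the colimit. As the `Bᵢ` are free, this is a projective resolution of the colimit, so
`Ext¹(colim Bᵢ, ℤ)` is the cokernel of `Hom(1 - σ, ℤ)`. Under `Hom(⨁ Bᵢ, ℤ) ≅ ∏ Hom(Bᵢ, ℤ)` this
dual map is the shift-difference map `1 - P`, whose cokernel is `lim¹ Hom(Bᵢ, ℤ)`.
-/

open CategoryTheory Limits ZeroObject

universe u v

namespace DirectSum

variable {B : ℕ → Type u} [∀ i, AddCommGroup (B i)] (f : ∀ i, B i →+ B (i + 1))

def telescope : (⨁ i, B i) →+ ⨁ i, B i :=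
  toAddMonoid fun i => of B i - (of B (i + 1)).comp (f i)

lemma telescope_of (i : ℕ) (b : B i) :
    telescope f (of B i b) = of B i b - of B (i + 1) (f i b) :=
  toAddMonoid_of _ _ _

lemma telescope_apply_zero (x : ⨁ i, B i) : telescope f x 0 = x 0 := by
  induction x using DirectSum.induction_on with
  | zero => simp
  | of i b => cases i <;> simp [telescope_of, of_apply]
  | add x y hx hy => simp [hx, hy]

lemma telescope_apply_succ (x : ⨁ i, B i) (i : ℕ) :
    telescope f x (i + 1) = x (i + 1) - f i (x i) := by
  induction x using DirectSum.induction_on with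
  | zero => simp
  | of j b =>
    rw [telescope_of, sub_apply]
    rcases eq_or_ne j i with rfl | hji
    · simp [of_eq_of_ne]
    · rw [of_eq_of_ne (j + 1) _ _ (by omega), of_eq_of_ne _ _ _ hji.symm, map_zero]
  | add x y hx hy => simp [hx, hy]; abel

lemma telescope_injective : Function.Injective (telescope f) := by
  refine (injective_iff_map_eq_zero _).2 fun x hx => DFinsupp.ext fun i => ?_
  have hx' (i : ℕ) : telescope f x i = 0 := by rw [hx]; rfl
  induction i with
  | zero => rw [← telescope_apply_zero f, hx']; rfl
  | succ i ih => simpa [ih, hx'] using (telescope_apply_succ f x i).symm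

lemma toAddMonoid_comp_telescope {A : Type*} [AddCommGroup A] (a : ∀ i, B i →+ A) :
    (toAddMonoid a).comp (telescope f) = toAddMonoid fun i => a i - (a (i + 1)).comp (f i) := by
  ext i b
  simp [telescope_of]

variable {f} {Cl : Type u} [AddCommGroup Cl] {g : ∀ i, B i →+ Cl}

lemma toAddMonoid_comp_telescope_eq_zero (hg : ∀ i, (g (i + 1)).comp (f i) = g i) :
    (toAddMonoid g).comp (telescope f) = 0 := by
  ext i b
  simp [telescope_of, ← hg i]

end DirectSum

open DirectSum

def IsSequentialColimit {B : ℕ → Type u} [∀ i, AddCommGroup (B i)] (f : ∀ i, B i →+ B (i + 1))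
    {Cl : Type u} [AddCommGroup Cl] (g : ∀ i, B i →+ Cl) : Prop :=
  ∀ (D : Type u) [AddCommGroup D] (h : ∀ i, B i →+ D),
    (∀ i, (h (i + 1)).comp (f i) = h i) → ∃! φ : Cl →+ D, ∀ i, φ.comp (g i) = h i

namespace IsSequentialColimit

variable {B : ℕ → Type u} [∀ i, AddCommGroup (B i)] {f : ∀ i, B i →+ B (i + 1)}
  {Cl : Type u} [AddCommGroup Cl] {g : ∀ i, B i →+ Cl}

lemma toAddMonoid_surjective (hcolim : IsSequentialColimit f g) :
    Function.Surjective (toAddMonoid g) := by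
  let Q := Cl ⧸ (toAddMonoid g).range
  have hmk : QuotientAddGroup.mk' (toAddMonoid g).range = 0 :=
    (hcolim Q (fun _ => 0) fun _ => rfl).unique
      (fun i => by ext b; exact (QuotientAddGroup.eq_zero_iff _).2 ⟨of B i b, toAddMonoid_of _ _ _⟩)
      (fun _ => rfl)
  intro c
  exact (QuotientAddGroup.eq_zero_iff c).1 congr($hmk c)

lemma ker_toAddMonoid_le (hcolim : IsSequentialColimit f g) :
    (toAddMonoid g).ker ≤ (telescope f).range := by
  let Q := (⨁ i, B i) ⧸ (telescope f).range
  let q (i : ℕ) : B i →+ Q := (QuotientAddGroup.mk' _).comp (of B i)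
  have hq (i : ℕ) : (q (i + 1)).comp (f i) = q i := by
    ext b
    simp only [q, AddMonoidHom.comp_apply, QuotientAddGroup.mk'_apply]
    rw [eq_comm, QuotientAddGroup.eq_iff_sub_mem]
    exact ⟨of B i b, telescope_of f i b⟩
  obtain ⟨φ, hφ, -⟩ := hcolim Q q hq
  have hφg : φ.comp (toAddMonoid g) = QuotientAddGroup.mk' _ := by
    ext i b
    simp only [AddMonoidHom.comp_apply, toAddMonoid_of]
    exact congr($(hφ i) b)
  intro x hx
  rw [← QuotientAddGroup.eq_zero_iff, ← QuotientAddGroup.mk'_apply, ← hφg,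
    AddMonoidHom.comp_apply, hx, map_zero]

lemma exact_telescope_toAddMonoid (hcolim : IsSequentialColimit f g)
    (hg : ∀ i, (g (i + 1)).comp (f i) = g i) :
    Function.Exact (telescope f) (toAddMonoid g) := fun x =>
  ⟨fun hx => hcolim.ker_toAddMonoid_le hx,
    by rintro ⟨y, rfl⟩; exact congr($(toAddMonoid_comp_telescope_eq_zero hg) y)⟩

end IsSequentialColimit

namespace CategoryTheory.ShortComplex

section

variable {C : Type*} [Category C] [HasZeroMorphisms C] [HasZeroObject C] (S : ShortComplex C)

noncomputable def twoTermComplex : ChainComplex C ℕ where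
  X
    | 0 => S.X₂
    | 1 => S.X₁
    | _ + 2 => 0
  d
    | 1, 0 => S.f
    | _, _ => 0
  shape
    | 1, 0, h => absurd rfl h
    | 0, _, _ | 1, _ + 1, _ | _ + 2, _, _ => rfl
  d_comp_d' := by
    rintro _ _ (_ | _) rfl rfl <;> exact zero_comp

lemma isZero_twoTermComplex_X (n : ℕ) : IsZero (S.twoTermComplex.X (n + 2)) :=
  isZero_zero C

end

variable {C : Type*} [Category C] [Abelian C] {S : ShortComplex C}

noncomputable def ShortExact.projectiveResolution (hS : S.ShortExact)
    [Projective S.X₁] [Projective S.X₂] : ProjectiveResolution S.X₃ where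
  complex := S.twoTermComplex
  projective
    | 0 => inferInstanceAs (Projective S.X₂)
    | 1 => inferInstanceAs (Projective S.X₁)
    | n + 2 => (S.isZero_twoTermComplex_X n).projective
  π := (ChainComplex.toSingle₀Equiv _ _).symm ⟨S.g, S.zero⟩
  quasiIso := ⟨fun
    | 0 => by
      -- the short complex in degree `0` is `S`, up to `π.f 0 = S.g`
      rw [ChainComplex.quasiIsoAt₀_iff, ShortComplex.quasiIso_iff_of_zeros' _ rfl rfl rfl]
      refine (ShortComplex.exact_and_epi_g_iff_of_iso ?_).2 ⟨hS.exact, hS.epi_g⟩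
      refine ShortComplex.isoMk (Iso.refl _) (Iso.refl _) (Iso.refl _) ?_ ?_
      · exact (Category.id_comp _).trans (Category.comp_id _).symm
      · exact (Category.id_comp _).trans ((ChainComplex.toSingle₀Equiv_symm_apply_f_zero
          (C := S.twoTermComplex) S.g S.zero).symm.trans (Category.comp_id _).symm)
    | 1 => by
      rw [quasiIsoAt_iff_exactAt' _ _ (ChainComplex.exactAt_succ_single_obj _ _),
        HomologicalComplex.exactAt_iff' _ 2 1 0 (by simp) (by simp),
        ShortComplex.exact_iff_mono _ rfl]
      exact hS.mono_f
    | n + 2 => by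
      rw [quasiIsoAt_iff_exactAt' _ _ (ChainComplex.exactAt_succ_single_obj _ _)]
      exact (HomologicalComplex.exactAt_iff _ _).2
        (ShortComplex.exact_of_isZero_X₂ _ (S.isZero_twoTermComplex_X n))⟩

end CategoryTheory.ShortComplex

namespace ModuleCat

variable {R : Type u} [CommRing R] [Small.{v} R]
  {P₁ P₀ M : Type v} [AddCommGroup P₁] [AddCommGroup P₀] [AddCommGroup M]
  [Module R P₁] [Module R P₀] [Module R M] (N : Type v) [AddCommGroup N] [Module R N]

noncomputable def extOneLinearEquivOfShortExact
    [Module.Projective R P₁] [Module.Projective R P₀]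
    {i : P₁ →ₗ[R] P₀} {π : P₀ →ₗ[R] M} (hi : Function.Injective i) (hπ : Function.Surjective π)
    (hexact : Function.Exact i π) :
    ((P₁ →ₗ[R] N) ⧸ LinearMap.range (LinearMap.lcomp R N i)) ≃ₗ[R]
      ((Ext R (ModuleCat.{v} R) 1).obj (Opposite.op (of R M))).obj (of R N) := by
  -- `Ext¹` is the cohomology of `Hom(P₀, N) → Hom(P₁, N) → 0`, i.e. a cokernel
  let S := ShortComplex.moduleCatMk i π hexact.linearMap_comp_eq_zero
  have hS : S.ShortExact := ModuleCat.shortComplex_shortExact S hexact hi hπ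
  have : Projective S.X₁ := inferInstanceAs (Projective (of R P₁))
  have : Projective S.X₂ := inferInstanceAs (Projective (of R P₀))
  let K := hS.projectiveResolution.complex.linearYonedaObj R (of R N)
  have : Subsingleton (K.X 2) := ⟨(S.isZero_twoTermComplex_X 0).eq_of_src⟩
  have hK : (K.sc' 0 1 2).g = 0 := (isZero_of_subsingleton (K.X 2)).eq_of_tgt _ _
  let H := ShortComplex.LeftHomologyData.ofIsColimitCokernelCofork (K.sc' 0 1 2) hK
    (cokernelCocone _) (cokernelIsColimit _)
  let e := hS.projectiveResolution.isoExt 1 (of R N) ≪≫ K.homologyIsoSc' 0 1 2 (by simp) (by simp)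
    ≪≫ H.homologyIso
  refine (Submodule.Quotient.equiv _ _
    (homLinearEquiv (M := of R P₁) (N := of R N) (S := R)).symm ?_).trans e.symm.toLinearEquiv
  have hprecomp : (homLinearEquiv (M := of R P₁) (N := of R N) (S := R)).symm.toLinearMap ∘ₗ
      LinearMap.lcomp R N i =
      (K.d 0 1).hom ∘ₗ (homLinearEquiv (M := of R P₀) (N := of R N) (S := R)).symm.toLinearMap :=
    rfl
  rw [← LinearMap.range_comp, hprecomp]
  exact LinearMap.range_comp_of_range_eq_top _ (LinearEquiv.range _)

end ModuleCat

theorem lim1_hom_equiv_ext_colim_general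
    (B : ℕ → Type) [∀ i, AddCommGroup (B i)]
    [∀ i, Module.Free ℤ (B i)]
    (f : ∀ i, B i →+ B (i + 1))
    (Cl : Type) [AddCommGroup Cl] (g : ∀ i, B i →+ Cl)
    (hg : ∀ i, (g (i + 1)).comp (f i) = g i)
    -- `Cl` is the colimit of the direct sequence: universal property
    (hcolim : ∀ (D : Type) [AddCommGroup D] (h : ∀ i, B i →+ D),
      (∀ i, (h (i + 1)).comp (f i) = h i) → ∃! φ : Cl →+ D, ∀ i, φ.comp (g i) = h i)
    -- the shift-difference map `1 − P` on `∏ᵢ Hom(Bᵢ, ℤ)`, with bonding maps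
    -- `Hom(B (i+1), ℤ) → Hom(B i, ℤ)` given by precomposition with `f i`
    (d : (∀ i, B i →+ ℤ) →+ (∀ i, B i →+ ℤ))
    (hd : ∀ (a : ∀ i, B i →+ ℤ) (i : ℕ), d a i = a i - (a (i + 1)).comp (f i)) :
    Nonempty
      (((∀ i, B i →+ ℤ) ⧸ d.range) ≃+
        ((Ext ℤ (ModuleCat.{0} ℤ) 1).obj (Opposite.op (ModuleCat.of ℤ Cl))).obj
          (ModuleCat.of ℤ ℤ)) := by
  have hcolim : IsSequentialColimit f g := hcolim
  let e : (∀ i, B i →+ ℤ) ≃+ ((⨁ i, B i) →ₗ[ℤ] ℤ) :=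
    DFinsupp.liftAddHom.trans (addMonoidHomLequivInt ℤ).toAddEquiv
  have hdual : e.toAddMonoidHom.comp d =
      (LinearMap.lcomp ℤ ℤ (telescope f).toIntLinearMap).toAddMonoidHom.comp e := by
    ext a : 1
    show (toAddMonoid (d a)).toIntLinearMap = ((toAddMonoid a).comp (telescope f)).toIntLinearMap
    rw [toAddMonoid_comp_telescope, show d a = _ from funext (hd a)]
  have hrange : d.range.map e.toAddMonoidHom =
      (LinearMap.range (LinearMap.lcomp ℤ ℤ (telescope f).toIntLinearMap)).toAddSubgroup := by
    rw [AddMonoidHom.map_range, hdual, AddMonoidHom.range_comp, e.range_eq_top,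
      ← AddMonoidHom.range_eq_map, LinearMap.range_toAddSubgroup]
  let E := ModuleCat.extOneLinearEquivOfShortExact ℤ (i := (telescope f).toIntLinearMap)
    (π := (toAddMonoid g).toIntLinearMap) (telescope_injective f) hcolim.toAddMonoid_surjective
      (hcolim.exact_telescope_toAddMonoid hg)
  exact ⟨(QuotientAddGroup.congr _ _ e hrange).trans E.toAddEquiv⟩

/-- Let `{B i}` be a direct sequence of finitely generated free abelian groups
with colimit `Cl` (given with its universal property), and consider the dual tower
`{Hom(B i, ℤ)}` with bonding maps given by precomposition. Then
`lim¹ᵢ Hom(Bᵢ, ℤ) ≅ Ext¹_ℤ(colimᵢ Bᵢ, ℤ)`, where `lim¹` is the cokernel of the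
shift-difference map `1 − P` on `∏ᵢ Hom(Bᵢ, ℤ)`. -/
theorem lim1_hom_equiv_ext_colim
    (B : ℕ → Type) [∀ i, AddCommGroup (B i)]
    [∀ i, Module.Free ℤ (B i)] [∀ i, Module.Finite ℤ (B i)]
    (f : ∀ i, B i →+ B (i + 1))
    (Cl : Type) [AddCommGroup Cl] (g : ∀ i, B i →+ Cl)
    (hg : ∀ i, (g (i + 1)).comp (f i) = g i)
    -- `Cl` is the colimit of the direct sequence: universal property
    (hcolim : ∀ (D : Type) [AddCommGroup D] (h : ∀ i, B i →+ D),
      (∀ i, (h (i + 1)).comp (f i) = h i) → ∃! φ : Cl →+ D, ∀ i, φ.comp (g i) = h i)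
    -- the shift-difference map `1 − P` on `∏ᵢ Hom(Bᵢ, ℤ)`, with bonding maps
    -- `Hom(B (i+1), ℤ) → Hom(B i, ℤ)` given by precomposition with `f i`
    (d : (∀ i, B i →+ ℤ) →+ (∀ i, B i →+ ℤ))
    (hd : ∀ (a : ∀ i, B i →+ ℤ) (i : ℕ), d a i = a i - (a (i + 1)).comp (f i)) :
    Nonempty
      (((∀ i, B i →+ ℤ) ⧸ d.range) ≃+
        ((Ext ℤ (ModuleCat.{0} ℤ) 1).obj (Opposite.op (ModuleCat.of ℤ Cl))).obj
          (ModuleCat.of ℤ ℤ)) :=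
  lim1_hom_equiv_ext_colim_general B f Cl g hg hcolim d hd
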